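/- Induced Legendre duality on the restricted tangent and cotangent spaces: let Ψ* be a dissipation function on ℝ^E with conjugate Ψ and let S ∈ ℝ^{V×E}. For v ∈ Im S define Ψ̃(v) := min{Ψ(j) : j ∈ ℝ^E, −S j = v} (the minimum is attained and unique), and for u ∈ ℝ^V define Ψ̃*(u) := Ψ*(−Sᵀu). Then these functions are Legendre–Fenchel conjugate on the pairing of Im S with ℝ^V modulo Ker Sᵀ: for every v ∈ Im S, Ψ̃(v) = sup_{u ∈ ℝ^V} (⟨v,u⟩ − Ψ̃*(u)), and for every u ∈ ℝ^V, Ψ̃*(u) = sup_{v ∈ Im S} (⟨v,u⟩ − Ψ̃(v)). Moreover Ψ̃ is symmetric (Ψ̃(−v) = Ψ̃(v)) and Ψ̃(0) = 0. -/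

import Mathlib

open Matrix Filter Set

noncomputable def grad {n : ℕ} (F : (Fin n → ℝ) → ℝ) (x : Fin n → ℝ) : Fin n → ℝ :=
  fun i => fderiv ℝ F x (Pi.single i 1)

def IsDissipation {n : ℕ} (Ψ : (Fin n → ℝ) → ℝ) : Prop :=
  StrictConvexOn ℝ Set.univ Ψ ∧ ContDiff ℝ 1 Ψ ∧
  Tendsto (fun f => Ψ f / ‖f‖) (Bornology.cobounded (Fin n → ℝ)) atTop ∧
  (∀ f, Ψ (-f) = Ψ f) ∧ Ψ 0 = 0

noncomputable def legendre {n : ℕ} (Ψ : (Fin n → ℝ) → ℝ) (j : Fin n → ℝ) : ℝ :=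
  ⨆ f : Fin n → ℝ, (j ⬝ᵥ f - Ψ f)

noncomputable def breg {n : ℕ} (F : (Fin n → ℝ) → ℝ) (x x' : Fin n → ℝ) : ℝ :=
  F x - F x' - (x - x') ⬝ᵥ grad F x'

def posOrth (n : ℕ) : Set (Fin n → ℝ) := {x | ∀ i, 0 < x i}

def IsThermo {n : ℕ} (Φ : (Fin n → ℝ) → ℝ) : Prop :=
  StrictConvexOn ℝ (posOrth n) Φ ∧
  (∀ x ∈ posOrth n, DifferentiableAt ℝ Φ x) ∧
  Set.BijOn (grad Φ) (posOrth n) Set.univ ∧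
  (∀ xin ∈ posOrth n, ∀ xbd ∈ frontier {x : Fin n → ℝ | ∀ i, 0 ≤ x i},
    Tendsto (fun lam : ℝ => deriv (fun l : ℝ => Φ (l • xin + (1 - l) • xbd)) lam)
      (nhdsWithin 0 (Set.Ioi 0)) atBot)

/-- The induced primal dissipation function on the restricted tangent space:
Ψ̃(v) := inf{Ψ(j) : −S j = v}. -/
noncomputable def psiTilde {V E : ℕ} (S : Matrix (Fin V) (Fin E) ℝ)
    (Ψstar : (Fin E → ℝ) → ℝ) (v : Fin V → ℝ) : ℝ :=
  sInf (legendre Ψstar '' {j | -(S *ᵥ j) = v})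

/-!
With `v = -S j` for some `j`, minimize `g ↦ Ψ*(g) - ⟨j, g⟩` over the range of `Sᵀ`: this is a
closed subspace and `Ψ*` is superlinear, so a minimizer `g₀ = -Sᵀu₀` exists, and the first-order
condition says that `j₀ := ∇Ψ*(g₀)` satisfies `-S j₀ = v`. Fenchel's equality
`Ψ(∇Ψ*(g)) = ⟨∇Ψ*(g), g⟩ - Ψ*(g)` then gives `Ψ(j₀) = ⟨v, u₀⟩ - Ψ*(-Sᵀu₀)`, which closes the
weak-duality gap `⟨v, u⟩ - Ψ*(-Sᵀu) ≤ Ψ(j')` (valid whenever `-S j' = v`). So `j₀` minimizes `Ψ`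
on the fibre and the supremum over `u` is attained at `u₀`. Symmetrically, the supremum over `v`
is attained at `v = -S ∇Ψ*(-Sᵀu)`. The minimizer is unique because `Ψ` is strictly convex: equality
in `Ψ(sa + tb) ≤ sΨ(a) + tΨ(b)` would make a maximizer `f` of `⟨sa + tb, ·⟩ - Ψ*` maximize
`⟨a, ·⟩ - Ψ*` and `⟨b, ·⟩ - Ψ*` as well, forcing `a = ∇Ψ*(f) = b`.
-/

section Calculus

variable {E : Type*} [NormedAddCommGroup E] [NormedSpace ℝ E] {F : E → ℝ} {x : E}

theorem ConvexOn.add_fderiv_sub_le (hF : ConvexOn ℝ univ F) (hd : DifferentiableAt ℝ F x)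
    (y : E) : F x + fderiv ℝ F x (y - x) ≤ F y := by
  set L : ℝ →ᵃ[ℝ] E := AffineMap.lineMap x y
  have hconv : ConvexOn ℝ univ (F ∘ L) := by simpa using hF.comp_affineMap L
  have hderiv : HasDerivAt (F ∘ L) (fderiv ℝ F x (y - x)) 0 :=
    hd.hasFDerivAt.comp_hasDerivAt_of_eq 0 AffineMap.hasDerivAt_lineMap
      (AffineMap.lineMap_apply_zero x y).symm
  have hslope := hconv.le_slope_of_hasDerivAt (mem_univ 0) (mem_univ 1) one_pos hderiv
  rw [slope_def_field, Function.comp_apply, Function.comp_apply, AffineMap.lineMap_apply_zero,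
    AffineMap.lineMap_apply_one, sub_zero, div_one] at hslope
  linarith

theorem IsMinOn.fderiv_apply_eq {W : Submodule ℝ E} {φ : E →L[ℝ] ℝ}
    (hmin : IsMinOn (fun y => F y - φ y) W x) (hx : x ∈ W) (hd : DifferentiableAt ℝ F x)
    {w : E} (hw : w ∈ W) : fderiv ℝ F x w = φ w := by
  have htangent : ∀ w ∈ W, w ∈ posTangentConeAt (W : Set E) x := fun w hw =>
    mem_posTangentConeAt_of_segment_subset <|
      (Submodule.convex W).segment_subset hx (W.add_mem hx hw)
  have := hmin.localize.hasFDerivWithinAt_eq_zero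
    (hd.hasFDerivAt.sub φ.hasFDerivAt).hasFDerivWithinAt
    (htangent w hw) (htangent (-w) (W.neg_mem hw))
  simpa [sub_eq_zero] using this

end Calculus

section Gradient

variable {n : ℕ}

noncomputable def dotProductCLM (a : Fin n → ℝ) : (Fin n → ℝ) →L[ℝ] ℝ :=
  LinearMap.toContinuousLinearMap (dotProductBilin ℝ ℝ a)

theorem grad_dotProduct (F : (Fin n → ℝ) → ℝ) (x f : Fin n → ℝ) :
    grad F x ⬝ᵥ f = fderiv ℝ F x f := by
  have hf : f = ∑ i, f i • Pi.single i 1 := by ext j; simp [Pi.single_apply]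
  conv_rhs => rw [hf]
  simp [grad, dotProduct, mul_comm]

theorem IsMinOn.grad_dotProduct_eq {F : (Fin n → ℝ) → ℝ} {a x w : Fin n → ℝ}
    {W : Submodule ℝ (Fin n → ℝ)} (hmin : IsMinOn (fun y => F y - a ⬝ᵥ y) W x) (hx : x ∈ W)
    (hd : DifferentiableAt ℝ F x) (hw : w ∈ W) : grad F x ⬝ᵥ w = a ⬝ᵥ w := by
  rw [grad_dotProduct]
  exact IsMinOn.fderiv_apply_eq (φ := dotProductCLM a) hmin hx hd hw

theorem eq_grad_of_forall_sub_dotProduct_le {F : (Fin n → ℝ) → ℝ} {a x : Fin n → ℝ}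
    (hd : DifferentiableAt ℝ F x) (hmin : ∀ y, F x - a ⬝ᵥ x ≤ F y - a ⬝ᵥ y) : a = grad F x :=
  dotProduct_eq _ _ fun w => (IsMinOn.grad_dotProduct_eq (W := ⊤) (w := w) (fun y _ => hmin y)
    Submodule.mem_top hd Submodule.mem_top).symm

end Gradient

theorem tendsto_sub_clm_of_superlinear {E : Type*} [NormedAddCommGroup E] [NormedSpace ℝ E]
    {F : E → ℝ} (hF : Tendsto (fun x => F x / ‖x‖) (Bornology.cobounded E) atTop)
    (φ : E →L[ℝ] ℝ) : Tendsto (fun x => F x - φ x) (Bornology.cobounded E) atTop := by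
  have hlarge : ∀ᶠ x in Bornology.cobounded E, ‖φ‖ + 1 ≤ F x / ‖x‖ ∧ 1 ≤ ‖x‖ :=
    (hF.eventually_ge_atTop _).and (tendsto_norm_cobounded_atTop.eventually_ge_atTop 1)
  refine tendsto_atTop_mono' _ (hlarge.mono fun x ⟨hFx, hx⟩ => ?_) tendsto_norm_cobounded_atTop
  have hFx' : (‖φ‖ + 1) * ‖x‖ ≤ F x := (le_div_iff₀ (one_pos.trans_le hx)).mp hFx
  nlinarith [le_abs_self (φ x), φ.le_opNorm x, Real.norm_eq_abs (φ x)]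

theorem ciSup_eq_of_forall_le_of_le {ι α : Type*} [ConditionallyCompleteLattice α] {f : ι → α}
    {a : α} (hle : ∀ i, f i ≤ a) (i₀ : ι) (hi₀ : a ≤ f i₀) : ⨆ i, f i = a :=
  have : Nonempty ι := ⟨i₀⟩
  le_antisymm (ciSup_le hle) (hi₀.trans (le_ciSup ⟨a, forall_mem_range.2 hle⟩ i₀))

theorem legendre_eq_of_forall_le {n : ℕ} {Ψ : (Fin n → ℝ) → ℝ} {j f₀ : Fin n → ℝ}
    (hmax : ∀ f, j ⬝ᵥ f - Ψ f ≤ j ⬝ᵥ f₀ - Ψ f₀) : legendre Ψ j = j ⬝ᵥ f₀ - Ψ f₀ :=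
  ciSup_eq_of_forall_le_of_le hmax f₀ le_rfl

theorem legendre_neg {n : ℕ} {Ψ : (Fin n → ℝ) → ℝ} (hΨ : ∀ f, Ψ (-f) = Ψ f) (j : Fin n → ℝ) :
    legendre Ψ (-j) = legendre Ψ j := by
  rw [legendre, ← (Equiv.neg _).iSup_comp]
  simp [legendre, hΨ]

namespace IsDissipation

variable {n : ℕ} {Ψ : (Fin n → ℝ) → ℝ}

theorem nonneg (h : IsDissipation Ψ) (f : Fin n → ℝ) : 0 ≤ Ψ f := by
  obtain ⟨hconv, -, -, hsymm, hzero⟩ := h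
  have hmid := hconv.convexOn.2 (mem_univ f) (mem_univ (-f)) (by norm_num : (0 : ℝ) ≤ 2⁻¹)
    (by norm_num : (0 : ℝ) ≤ 2⁻¹) (by norm_num)
  rw [smul_neg, add_neg_cancel, hzero, hsymm] at hmid
  simp only [smul_eq_mul] at hmid
  linarith

theorem exists_isMinOn_sub_dotProduct (h : IsDissipation Ψ) (a : Fin n → ℝ) {s : Set (Fin n → ℝ)}
    (hs : IsClosed s) (hne : s.Nonempty) : ∃ g ∈ s, IsMinOn (fun f => Ψ f - a ⬝ᵥ f) s g := by
  have hcoercive := tendsto_sub_clm_of_superlinear h.2.2.1 (dotProductCLM a)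
  rw [Metric.cobounded_eq_cocompact] at hcoercive
  have hcont : Continuous fun f => Ψ f - a ⬝ᵥ f :=
    h.2.1.continuous.sub (dotProductCLM a).continuous
  obtain ⟨g₀, hg₀⟩ := hne
  exact hcont.continuousOn.exists_isMinOn' hs hg₀
    ((hcoercive.eventually_ge_atTop _).filter_mono inf_le_left)

theorem exists_forall_dotProduct_sub_le (h : IsDissipation Ψ) (j : Fin n → ℝ) :
    ∃ f₀, ∀ f, j ⬝ᵥ f - Ψ f ≤ j ⬝ᵥ f₀ - Ψ f₀ := by
  obtain ⟨f₀, -, hf₀⟩ := h.exists_isMinOn_sub_dotProduct j isClosed_univ univ_nonempty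
  exact ⟨f₀, fun f => by linarith [isMinOn_iff.mp hf₀ f (mem_univ f)]⟩

theorem le_legendre (h : IsDissipation Ψ) (j f : Fin n → ℝ) : j ⬝ᵥ f - Ψ f ≤ legendre Ψ j := by
  obtain ⟨f₀, hf₀⟩ := h.exists_forall_dotProduct_sub_le j
  exact (legendre_eq_of_forall_le hf₀).symm ▸ hf₀ f

theorem legendre_nonneg (h : IsDissipation Ψ) (j : Fin n → ℝ) : 0 ≤ legendre Ψ j := by
  simpa [h.2.2.2.2] using h.le_legendre j 0

theorem legendre_zero (h : IsDissipation Ψ) : legendre Ψ 0 = 0 := by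
  simpa [h.2.2.2.2] using legendre_eq_of_forall_le (Ψ := Ψ) (j := 0) (f₀ := 0)
    fun f => by simpa [h.2.2.2.2] using h.nonneg f

theorem legendre_eq_iff (h : IsDissipation Ψ) {j f : Fin n → ℝ} :
    legendre Ψ j = j ⬝ᵥ f - Ψ f ↔ j = grad Ψ f := by
  have hd : DifferentiableAt ℝ Ψ f := h.2.1.differentiable one_ne_zero f
  constructor
  · refine fun hj => eq_grad_of_forall_sub_dotProduct_le hd fun y => ?_
    linarith [h.le_legendre j y]
  · rintro rfl
    refine legendre_eq_of_forall_le fun y => ?_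
    have := h.1.convexOn.add_fderiv_sub_le hd y
    rw [← grad_dotProduct, dotProduct_sub] at this
    linarith

theorem strictConvexOn_legendre (h : IsDissipation Ψ) : StrictConvexOn ℝ univ (legendre Ψ) := by
  refine ⟨convex_univ, fun a _ b _ hab s t hs ht hst => ?_⟩
  obtain ⟨f₀, hf₀⟩ := h.exists_forall_dotProduct_sub_le (s • a + t • b)
  rw [legendre_eq_of_forall_le hf₀, add_dotProduct, smul_dotProduct, smul_dotProduct]
  simp only [smul_eq_mul]
  have ha := sub_nonneg.2 (h.le_legendre a f₀)
  have hb := sub_nonneg.2 (h.le_legendre b f₀)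
  by_contra! hle
  have hgap :
      s * (legendre Ψ a - (a ⬝ᵥ f₀ - Ψ f₀)) + t * (legendre Ψ b - (b ⬝ᵥ f₀ - Ψ f₀)) ≤ 0 := by
    linear_combination hle + Ψ f₀ * hst
  have ha' : legendre Ψ a = a ⬝ᵥ f₀ - Ψ f₀ := by nlinarith [mul_nonneg ht.le hb]
  have hb' : legendre Ψ b = b ⬝ᵥ f₀ - Ψ f₀ := by nlinarith [mul_nonneg hs.le ha]
  exact hab ((h.legendre_eq_iff.mp ha').trans (h.legendre_eq_iff.mp hb').symm)

theorem exists_mem_grad_dotProduct_eq (h : IsDissipation Ψ) (W : Submodule ℝ (Fin n → ℝ))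
    (a : Fin n → ℝ) : ∃ g ∈ W, ∀ w ∈ W, grad Ψ g ⬝ᵥ w = a ⬝ᵥ w := by
  obtain ⟨g, hgW, hmin⟩ := h.exists_isMinOn_sub_dotProduct a W.closed_of_finiteDimensional
    ⟨0, W.zero_mem⟩
  exact ⟨g, hgW, fun w hw => hmin.grad_dotProduct_eq hgW (h.2.1.differentiable one_ne_zero g) hw⟩

end IsDissipation

section Restriction

variable {V E : ℕ} {S : Matrix (Fin V) (Fin E) ℝ} {Ψ : (Fin E → ℝ) → ℝ} {v : Fin V → ℝ}

theorem psiTilde_neg (hΨ : ∀ f, Ψ (-f) = Ψ f) (v : Fin V → ℝ) :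
    psiTilde S Ψ (-v) = psiTilde S Ψ v := by
  unfold psiTilde
  congr 1
  ext x
  constructor <;> rintro ⟨j, hj, rfl⟩ <;>
    exact ⟨-j, by simpa [mulVec_neg] using hj, legendre_neg hΨ j⟩

namespace IsDissipation

theorem dotProduct_sub_le_legendre (h : IsDissipation Ψ) {j : Fin E → ℝ} (hj : -(S *ᵥ j) = v)
    (u : Fin V → ℝ) : v ⬝ᵥ u - Ψ (-(Sᵀ *ᵥ u)) ≤ legendre Ψ j := by
  have := h.le_legendre j (-(Sᵀ *ᵥ u))
  rwa [dotProduct_neg, dotProduct_transpose_mulVec, dotProduct_comm, ← neg_dotProduct, hj] at this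

theorem exists_legendre_eq_dotProduct_sub (h : IsDissipation Ψ) (hv : v ∈ range S.mulVec) :
    ∃ j u, -(S *ᵥ j) = v ∧ legendre Ψ j = v ⬝ᵥ u - Ψ (-(Sᵀ *ᵥ u)) := by
  obtain ⟨w, rfl⟩ := hv
  obtain ⟨_, ⟨u, rfl⟩, hg⟩ := h.exists_mem_grad_dotProduct_eq (LinearMap.range Sᵀ.mulVecLin) (-w)
  simp only [mulVecLin_apply, LinearMap.mem_range, forall_exists_index, forall_apply_eq_imp_iff]
    at hg
  set j := grad Ψ (Sᵀ *ᵥ u)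
  have hj : -(S *ᵥ j) = S *ᵥ w := dotProduct_eq _ _ fun y => by
    rw [neg_dotProduct, dotProduct_comm, ← dotProduct_transpose_mulVec, hg,
      dotProduct_transpose_mulVec, mulVec_neg, dotProduct_neg, dotProduct_comm, neg_neg]
  refine ⟨j, -u, hj, ?_⟩
  rw [h.legendre_eq_iff.mpr rfl, hg, mulVec_neg, neg_neg, dotProduct_transpose_mulVec]
  simp [mulVec_neg, dotProduct_comm]

theorem psiTilde_le_legendre (h : IsDissipation Ψ) {j : Fin E → ℝ} (hj : -(S *ᵥ j) = v) :
    psiTilde S Ψ v ≤ legendre Ψ j :=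
  csInf_le ⟨0, forall_mem_image.2 fun j _ => h.legendre_nonneg j⟩ (mem_image_of_mem _ hj)

theorem dotProduct_sub_le_psiTilde (h : IsDissipation Ψ) (hv : v ∈ range S.mulVec)
    (u : Fin V → ℝ) : v ⬝ᵥ u - Ψ (-(Sᵀ *ᵥ u)) ≤ psiTilde S Ψ v := by
  obtain ⟨w, rfl⟩ := hv
  refine le_csInf ⟨_, mem_image_of_mem _ (show -(S *ᵥ -w) = S *ᵥ w by simp [mulVec_neg])⟩ ?_
  exact forall_mem_image.2 fun j hj => h.dotProduct_sub_le_legendre hj u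

theorem exists_psiTilde_eq (h : IsDissipation Ψ) (hv : v ∈ range S.mulVec) :
    ∃ j u, -(S *ᵥ j) = v ∧ legendre Ψ j = psiTilde S Ψ v ∧
      psiTilde S Ψ v = v ⬝ᵥ u - Ψ (-(Sᵀ *ᵥ u)) := by
  obtain ⟨j, u, hj, hdual⟩ := h.exists_legendre_eq_dotProduct_sub hv
  have hmin : psiTilde S Ψ v = legendre Ψ j :=
    le_antisymm (h.psiTilde_le_legendre hj) (hdual ▸ h.dotProduct_sub_le_psiTilde hv u)
  exact ⟨j, u, hj, hmin.symm, hmin.trans hdual⟩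

theorem eq_of_legendre_eq_psiTilde (h : IsDissipation Ψ) {j j' : Fin E → ℝ}
    (hj : -(S *ᵥ j) = v) (hj' : -(S *ᵥ j') = v) (hmin : legendre Ψ j = psiTilde S Ψ v)
    (hmin' : legendre Ψ j' = psiTilde S Ψ v) : j = j' := by
  have hconvex : Convex ℝ {j | -(S *ᵥ j) = v} :=
    (convex_singleton v).linear_preimage (-S.mulVecLin)
  have hisMin : ∀ {k}, legendre Ψ k = psiTilde S Ψ v → IsMinOn (legendre Ψ) {j | -(S *ᵥ j) = v} k :=
    fun hk _ hi => hk ▸ h.psiTilde_le_legendre hi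
  exact (h.strictConvexOn_legendre.subset (subset_univ _) hconvex).eq_of_isMinOn
    (hisMin hmin) (hisMin hmin') hj hj'

theorem exists_le_dotProduct_sub_psiTilde (h : IsDissipation Ψ) (u : Fin V → ℝ) :
    ∃ v ∈ range S.mulVec, Ψ (-(Sᵀ *ᵥ u)) ≤ v ⬝ᵥ u - psiTilde S Ψ v := by
  set j := grad Ψ (-(Sᵀ *ᵥ u))
  refine ⟨-(S *ᵥ j), ⟨-j, mulVec_neg _ _⟩, ?_⟩
  have := h.psiTilde_le_legendre (rfl : -(S *ᵥ j) = _)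
  rw [h.legendre_eq_iff.mpr rfl, dotProduct_neg, dotProduct_transpose_mulVec, dotProduct_comm,
    ← neg_dotProduct] at this
  linarith

theorem psiTilde_zero (h : IsDissipation Ψ) : psiTilde S Ψ 0 = 0 := by
  refine le_antisymm ((h.psiTilde_le_legendre (j := 0) (by simp)).trans_eq h.legendre_zero) ?_
  simpa [h.2.2.2.2] using h.dotProduct_sub_le_psiTilde (S := S) ⟨0, mulVec_zero _⟩ 0

end IsDissipation

end Restriction

/-- Induced Legendre duality on the restricted tangent and cotangent spaces:
the minimum defining Ψ̃ is attained at a unique point; Ψ̃ and Ψ̃*(u) := Ψ*(−Sᵀu) are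
Legendre–Fenchel conjugate over Im S and ℝ^V; Ψ̃ is symmetric and vanishes at 0. -/
theorem induced_duality_on_tangent_spaces {V E : ℕ}
    (S : Matrix (Fin V) (Fin E) ℝ)
    (Ψstar : (Fin E → ℝ) → ℝ) (h : IsDissipation Ψstar) :
    (∀ v ∈ Set.range S.mulVec, ∃ j : Fin E → ℝ,
      -(S *ᵥ j) = v ∧ legendre Ψstar j = psiTilde S Ψstar v ∧
      (∀ j' : Fin E → ℝ, -(S *ᵥ j') = v → j' ≠ j →
        psiTilde S Ψstar v < legendre Ψstar j')) ∧
    (∀ v ∈ Set.range S.mulVec,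
      psiTilde S Ψstar v = ⨆ u : Fin V → ℝ, (v ⬝ᵥ u - Ψstar (-(Sᵀ *ᵥ u)))) ∧
    (∀ u : Fin V → ℝ,
      Ψstar (-(Sᵀ *ᵥ u)) =
        ⨆ v : Set.range S.mulVec, ((v : Fin V → ℝ) ⬝ᵥ u - psiTilde S Ψstar v)) ∧
    (∀ v ∈ Set.range S.mulVec, psiTilde S Ψstar (-v) = psiTilde S Ψstar v) ∧
    psiTilde S Ψstar 0 = 0 := by
  refine ⟨fun v hv => ?_, fun v hv => ?_, fun u => ?_, fun v _ => psiTilde_neg h.2.2.2.1 v,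
    h.psiTilde_zero⟩
  · obtain ⟨j, -, hj, hmin, -⟩ := h.exists_psiTilde_eq hv
    refine ⟨j, hj, hmin, fun j' hj' hne => (h.psiTilde_le_legendre hj').lt_of_ne fun heq => ?_⟩
    exact hne (h.eq_of_legendre_eq_psiTilde hj' hj heq.symm hmin)
  · obtain ⟨-, u, -, -, hdual⟩ := h.exists_psiTilde_eq hv
    exact (ciSup_eq_of_forall_le_of_le (h.dotProduct_sub_le_psiTilde hv) u hdual.le).symm
  · obtain ⟨v, hv, hle⟩ := h.exists_le_dotProduct_sub_psiTilde u
    refine (ciSup_eq_of_forall_le_of_le (fun w => ?_) ⟨v, hv⟩ hle).symm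
    linarith [h.dotProduct_sub_le_psiTilde w.2 u]
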